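/- Let R be a ring. Suppose that either R has invariant basis number, or R has type (n, h) with n > 1, or R has type (1, 1) or (1, 2). Then every automorphism of the category C_R of finitely generated free left R-modules is semi-inner. -/

import Mathlib

open CategoryTheory

/-- The category `C_R`: the full subcategory of the category of left `R`-modules whose
objects are the finitely generated free left `R`-modules. -/
def CR (R : Type) [Ring R] : Type 1 :=
  ObjectProperty.FullSubcategory (fun M : ModuleCat.{0} R => Module.Finite R M ∧ Module.Free R M)

instance (R : Type) [Ring R] : Category (CR R) :=
  ObjectProperty.FullSubcategory.category _

/-- A morphism of `C_R` is just an `R`-linear map. -/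
def homToLin {R : Type} [Ring R] {F G : CR R} (f : F ⟶ G) : F.obj →ₗ[R] G.obj := f.hom.hom

/-- An automorphism `φ` of the category `C_R` is *semi-inner* if there are a ring
automorphism `σ` of `R` and additive isomorphisms `s_F : F ≃+ φ(F)`, one for each object
`F` of `C_R`, with `s_F (r • a) = σ r • s_F a`, such that `φ(f) ∘ s_F = s_G ∘ f` for
every `R`-linear map `f : F ⟶ G`. -/
def SemiInner (R : Type) [Ring R] (φ : Aut (Cat.of (CR R))) : Prop :=
  ∃ (σ : R ≃+* R)
    (s : ∀ F : CR R, F.obj ≃+ ((φ.hom.toFunctor : CR R ⥤ CR R).obj F).obj),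
    (∀ (F : CR R) (r : R) (a : F.obj), s F (r • a) = σ r • s F a) ∧
    (∀ (F G : CR R) (f : F ⟶ G) (a : F.obj),
      homToLin ((φ.hom.toFunctor : CR R ⥤ CR R).map f) (s F a) = s G (homToLin f a))

/-- A ring `R` *has type* `(n, h)` if `(n, h)` is the lexicographically least pair of
positive integers such that `R^n ≅ R^(n+h)` as left `R`-modules. -/
def HasType (R : Type) [Ring R] (n h : ℕ) : Prop :=
  0 < n ∧ 0 < h ∧ Nonempty ((Fin n → R) ≃ₗ[R] (Fin (n + h) → R)) ∧
    ∀ n' h' : ℕ, 0 < n' → 0 < h' →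
      Nonempty ((Fin n' → R) ≃ₗ[R] (Fin (n' + h') → R)) →
      (n < n' ∨ (n = n' ∧ h ≤ h'))

/-!
An automorphism `Φ` of `C_R` is an additive equivalence. If `Φ(R) ≅ R^k`, additivity gives
`Φ(R^m) ≅ R^(m k)`, and choosing `m` with `Φ(R^m) ≅ R` yields `R ≅ R^(m k)`. Each hypothesis
on `R` lets us cancel `m` here and conclude `Φ(R) ≅ R`: with IBN or type `(n, h)`, `n > 1`, only
`R ≅ R^1`; with type `(1, 1)` every `R^k` with `k > 0` is `≅ R`; with type `(1, 2)` the `a` with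
`R ≅ R^a` are exactly the odd ones, and a factor of an odd number is odd.

Given `u : Φ(R) ≅ R`, identify `a ∈ F` with `ℓ_a : R → F, r ↦ r a`, and put
`s_F a = Φ(ℓ_a)(u⁻¹ 1)` and `σ = u ∘ s_R`. Naturality of `s` is functoriality of `Φ`, and
`ℓ_(r a) = ℓ_r ≫ ℓ_a` gives `s_F (r a) = σ r • s_F a`, which for `F = R` says that `σ` is
multiplicative.
-/

open Limits

def finAddPiLinearEquiv (R : Type) [Ring R] (a b : ℕ) :
    (Fin (a + b) → R) ≃ₗ[R] (Fin a → R) × (Fin b → R) :=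
  (LinearEquiv.funCongrLeft R R finSumFinEquiv).trans
    (LinearEquiv.sumArrowLequivProdArrow _ _ R R)

abbrev PowIso (R : Type) [Ring R] (a b : ℕ) : Prop := Nonempty ((Fin a → R) ≃ₗ[R] (Fin b → R))

namespace PowIso

variable {R : Type} [Ring R] {a b c n d : ℕ}

theorem refl (R : Type) [Ring R] (a : ℕ) : PowIso R a a := ⟨LinearEquiv.refl R _⟩

theorem symm (h : PowIso R a b) : PowIso R b a := h.map LinearEquiv.symm

theorem trans (h : PowIso R a b) (h' : PowIso R b c) : PowIso R a c :=
  h.elim fun e => h'.map e.trans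

theorem add_right (h : PowIso R a b) (c : ℕ) : PowIso R (a + c) (b + c) :=
  h.map fun e => (finAddPiLinearEquiv R a c).trans
    ((e.prodCongr (LinearEquiv.refl R _)).trans (finAddPiLinearEquiv R b c).symm)

theorem add_mul (h : PowIso R n (n + d)) : ∀ j, PowIso R n (n + j * d)
  | 0 => by simpa using refl R n
  | j + 1 => h.trans (by rw [Nat.succ_mul, ← Nat.add_assoc]; exact (add_mul h j).add_right d)

theorem of_subsingleton [Subsingleton R] (a b : ℕ) : PowIso R a b :=
  ⟨LinearEquiv.ofLinearMap 0 0 (Subsingleton.elim _ _) (Subsingleton.elim _ _)⟩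

theorem subsingleton (h : PowIso R 1 0) : Subsingleton R := by
  obtain ⟨e⟩ := h
  have : Subsingleton (Fin 1 → R) := e.toEquiv.subsingleton
  exact (Equiv.funUnique (Fin 1) R).symm.subsingleton

end PowIso

section Cancellation

variable {R : Type} [Ring R]

theorem HasType.powIso {n h : ℕ} (hT : HasType R n h) : PowIso R n (n + h) := hT.2.2.1

theorem HasType.eq_one_of_powIso_one {n h a : ℕ} (hT : HasType R n h) (hn : 1 < n)
    (ha : PowIso R 1 a) : a = 1 := by
  by_contra hne
  obtain ⟨d, hd, e⟩ : ∃ d, 0 < d ∧ PowIso R 1 (1 + d) := by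
    rcases Nat.eq_zero_or_pos a with rfl | hpos
    · have := ha.subsingleton
      exact ⟨1, one_pos, .of_subsingleton _ _⟩
    · exact ⟨a - 1, by omega, by rwa [Nat.add_sub_cancel' hpos]⟩
  have := hT.2.2.2 1 d one_pos hd e
  omega

theorem HasType.odd_of_powIso_one {a : ℕ} (hT : HasType R 1 2) (ha : PowIso R 1 a) : Odd a := by
  have not_one_two : ¬ PowIso R 1 (1 + 1) := fun e => by
    have := hT.2.2.2 1 1 one_pos one_pos e
    omega
  by_contra hodd
  obtain ⟨j, rfl⟩ := Nat.not_odd_iff_even.mp hodd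
  rcases j with _ | i
  · have := ha.subsingleton
    exact not_one_two (.of_subsingleton _ _)
  · have two_four : PowIso R 2 (2 + 2) := hT.powIso.add_right 1
    rw [show i + 1 + (i + 1) = 2 + i * 2 by ring] at ha
    exact not_one_two (ha.trans (two_four.add_mul i).symm)

theorem powIso_one_of_mul_of_eq_one (h : ∀ a, PowIso R 1 a → a = 1) {m k : ℕ}
    (hmk : PowIso R 1 (m * k)) : PowIso R 1 k := by
  rw [Nat.eq_one_of_mul_eq_one_left (h _ hmk)]
  exact .refl R 1

theorem HasType.powIso_one_of_mul_of_one_one (hT : HasType R 1 1) {m k : ℕ}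
    (hmk : PowIso R 1 (m * k)) : PowIso R 1 k := by
  rcases k with _ | k
  · simpa using hmk
  · simpa [add_comm] using hT.powIso.add_mul k

theorem HasType.powIso_one_of_mul_of_one_two (hT : HasType R 1 2) {m k : ℕ}
    (hmk : PowIso R 1 (m * k)) : PowIso R 1 k := by
  obtain ⟨j, rfl⟩ := Nat.Odd.of_mul_right (hT.odd_of_powIso_one hmk)
  simpa [add_comm, mul_comm] using hT.powIso.add_mul j

end Cancellation

namespace CR

variable {R : Type} [Ring R]

instance : Preadditive (CR R) := inferInstanceAs (Preadditive (ObjectProperty.FullSubcategory _))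

instance (F : CR R) : Module.Finite R F.obj := F.property.1

instance (F : CR R) : Module.Free R F.obj := F.property.2

variable (R) in
def of (M : Type) [AddCommGroup M] [Module R M] [Module.Finite R M] [Module.Free R M] : CR R :=
  ⟨ModuleCat.of R M, inferInstance, inferInstance⟩

def ofHom {F G : CR R} (f : F.obj →ₗ[R] G.obj) : F ⟶ G := ⟨ModuleCat.ofHom f⟩

@[simp]
theorem homToLin_ofHom {F G : CR R} (f : F.obj →ₗ[R] G.obj) : homToLin (ofHom f) = f := rfl

@[simp]
theorem homToLin_comp {F G H : CR R} (f : F ⟶ G) (g : G ⟶ H) :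
    homToLin (f ≫ g) = homToLin g ∘ₗ homToLin f := rfl

@[ext]
theorem hom_ext {F G : CR R} {f g : F ⟶ G} (h : homToLin f = homToLin g) : f = g :=
  InducedCategory.hom_ext (ModuleCat.hom_ext h)

def isoOfLinearEquiv {F G : CR R} (e : F.obj ≃ₗ[R] G.obj) : F ≅ G where
  hom := ofHom e.toLinearMap
  inv := ofHom e.symm.toLinearMap

def linearEquivOfIso {F G : CR R} (e : F ≅ G) : F.obj ≃ₗ[R] G.obj :=
  .ofLinearMap (homToLin e.hom) (homToLin e.inv) (congrArg homToLin e.inv_hom_id)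
    (congrArg homToLin e.hom_inv_id)

def prodBicone (F G : CR R) : BinaryBicone F G where
  pt := of R (F.obj × G.obj)
  fst := ofHom (LinearMap.fst R F.obj G.obj)
  snd := ofHom (LinearMap.snd R F.obj G.obj)
  inl := ofHom (LinearMap.inl R F.obj G.obj)
  inr := ofHom (LinearMap.inr R F.obj G.obj)

def prodBicone_isBilimit (F G : CR R) : (prodBicone F G).IsBilimit :=
  isBinaryBilimitOfTotal _ <| hom_ext <|
    LinearMap.ext fun x => Prod.ext (add_zero x.1) (zero_add x.2)

instance : HasBinaryBiproducts (CR R) where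
  has_binary_biproduct F G := .mk ⟨_, prodBicone_isBilimit F G⟩

variable (R) in
abbrev free (n : ℕ) : CR R := of R (Fin n → R)

variable (R) in
abbrev regular : CR R := of R R

theorem isZero_free_zero : IsZero (free R 0) :=
  (IsZero.iff_id_eq_zero _).mpr <| hom_ext <|
    LinearMap.ext fun _ => Subsingleton.elim (α := Fin 0 → R) _ _

noncomputable def freeAddIso (a b : ℕ) : free R (a + b) ≅ free R a ⊞ free R b :=
  isoOfLinearEquiv (G := (prodBicone (free R a) (free R b)).pt) (finAddPiLinearEquiv R a b) ≪≫
    biprod.uniqueUpToIso _ _ (prodBicone_isBilimit _ _)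

def regularIsoFreeOne : regular R ≅ free R 1 :=
  isoOfLinearEquiv (LinearEquiv.funUnique (Fin 1) R R).symm

theorem exists_iso_free (F : CR R) : ∃ n, Nonempty (F ≅ free R n) :=
  let b := Module.Free.chooseBasis R F.obj
  ⟨_, ⟨isoOfLinearEquiv <|
    b.equivFun.trans (LinearEquiv.funCongrLeft R R (Fintype.equivFin _).symm)⟩⟩

theorem powIso_of_iso {a b : ℕ} (e : free R a ≅ free R b) : PowIso R a b := ⟨linearEquivOfIso e⟩

theorem nonempty_obj_free_iso (Φ : CR R ⥤ CR R) [Φ.Additive] {k : ℕ}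
    (e : Φ.obj (free R 1) ≅ free R k) : ∀ m, Nonempty (Φ.obj (free R m) ≅ free R (m * k))
  | 0 => ⟨(Φ.map_isZero isZero_free_zero).iso (by simpa using isZero_free_zero)⟩
  | m + 1 =>
    have := preservesBinaryBiproducts_of_preservesBiproducts Φ
    (nonempty_obj_free_iso Φ e m).map fun eₘ =>
      Φ.mapIso (freeAddIso m 1) ≪≫ Φ.mapBiprod _ _ ≪≫ biprod.mapIso eₘ e ≪≫
        (freeAddIso (m * k) k).symm ≪≫ eqToIso (by rw [Nat.succ_mul])

theorem nonempty_obj_regular_iso (hR : ∀ m k, PowIso R 1 (m * k) → PowIso R 1 k)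
    (Φ : CR R ⥤ CR R) [Φ.EssSurj] [Φ.Additive] : Nonempty (Φ.obj (regular R) ≅ regular R) := by
  obtain ⟨k, ⟨e⟩⟩ := exists_iso_free (Φ.obj (free R 1))
  obtain ⟨m, ⟨e'⟩⟩ := exists_iso_free (Φ.objPreimage (free R 1))
  obtain ⟨eₘ⟩ := nonempty_obj_free_iso Φ e m
  obtain ⟨f⟩ := (hR m k (powIso_of_iso ((Φ.objObjPreimageIso _).symm ≪≫ Φ.mapIso e' ≪≫ eₘ))).symm
  exact ⟨Φ.mapIso regularIsoFreeOne ≪≫ e ≪≫ isoOfLinearEquiv (F := free R k) (G := free R 1) f ≪≫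
    regularIsoFreeOne.symm⟩

def homRegularEquiv (F : CR R) : F.obj ≃+ (regular R ⟶ F) where
  toFun a := ofHom (LinearMap.toSpanSingleton R F.obj a)
  invFun f := homToLin f (1 : R)
  left_inv a := one_smul R a
  right_inv f := by ext1; exact LinearMap.ext_ring (one_smul R _)
  map_add' a b := by ext1; exact LinearMap.ext fun r : R => smul_add r a b

theorem homRegularEquiv_comp {F G : CR R} (a : F.obj) (f : F ⟶ G) :
    homRegularEquiv F a ≫ f = homRegularEquiv G (homToLin f a) := by
  ext1; exact LinearMap.ext fun r : R => map_smul (homToLin f) r a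

section Transport

variable (Φ : CR R ⥤ CR R) [Φ.Full] [Φ.Faithful] [Φ.Additive] (u : Φ.obj (regular R) ≅ regular R)

noncomputable def transport (F : CR R) : F.obj ≃+ (Φ.obj F).obj where
  toEquiv := (homRegularEquiv F).toEquiv.trans <|
    (Functor.FullyFaithful.ofFullyFaithful Φ).homEquiv.trans <|
      u.homFromEquiv.trans (homRegularEquiv (Φ.obj F)).symm.toEquiv
  map_add' a b := by simp

theorem transport_apply (F : CR R) (a : F.obj) :
    transport Φ u F a = homToLin (Φ.map (homRegularEquiv F a)) (homToLin u.inv (1 : R)) := rfl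

theorem transport_naturality {F G : CR R} (f : F ⟶ G) (a : F.obj) :
    homToLin (Φ.map f) (transport Φ u F a) = transport Φ u G (homToLin f a) := by
  simp only [transport_apply, ← homRegularEquiv_comp, Φ.map_comp, homToLin_comp]
  rfl

noncomputable def twistAddEquiv : R ≃+ R :=
  (transport Φ u (regular R)).trans (linearEquivOfIso u).toAddEquiv

theorem transport_smul (F : CR R) (r : R) (a : F.obj) :
    transport Φ u F (r • a) = twistAddEquiv Φ u r • transport Φ u F a := by
  have hw : transport Φ u (regular R) r = twistAddEquiv Φ u r • homToLin u.inv (1 : R) :=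
    calc transport Φ u (regular R) r
        = homToLin u.inv (twistAddEquiv Φ u r) :=
          congr(homToLin $(u.hom_inv_id) (transport Φ u (regular R) r)).symm
      _ = homToLin u.inv (twistAddEquiv Φ u r • (1 : R)) := by rw [smul_eq_mul, mul_one]
      _ = _ := map_smul _ _ _
  calc transport Φ u F (r • a)
      = homToLin (Φ.map (homRegularEquiv F a)) (transport Φ u (regular R) r) :=
        (transport_naturality Φ u (homRegularEquiv F a) r).symm
    _ = twistAddEquiv Φ u r • transport Φ u F a := by rw [hw, map_smul]; rfl

noncomputable def twistRingEquiv : R ≃+* R :=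
  { twistAddEquiv Φ u with
    map_mul' r s :=
      (congrArg (homToLin u.hom) (transport_smul Φ u (regular R) r s)).trans (map_smul _ _ _) }

end Transport

end CR

theorem semiInner_of_powIso_one_of_mul {R : Type} [Ring R]
    (hR : ∀ m k, PowIso R 1 (m * k) → PowIso R 1 k) (φ : Aut (Cat.of (CR R))) : SemiInner R φ := by
  let Φ : CR R ⥤ CR R := φ.hom.toFunctor
  have : Φ.IsEquivalence := (Cat.equivOfIso φ).isEquivalence_functor
  have : Φ.Additive := Φ.additive_of_preserves_binary_products
  obtain ⟨u⟩ := CR.nonempty_obj_regular_iso hR Φ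
  exact ⟨CR.twistRingEquiv Φ u, CR.transport Φ u, CR.transport_smul Φ u,
    fun _ _ => CR.transport_naturality Φ u⟩

/-- if `R` has invariant basis number, or has type `(n, h)` with `n > 1`,
or has type `(1, 1)` or `(1, 2)`, then every automorphism of the category `C_R` of
finitely generated free left `R`-modules is semi-inner. -/
theorem stmt11 (R : Type) [Ring R]
    (hR : (∀ n m : ℕ, Nonempty ((Fin n → R) ≃ₗ[R] (Fin m → R)) → n = m) ∨
          (∃ n h : ℕ, HasType R n h ∧ 1 < n) ∨
          HasType R 1 1 ∨ HasType R 1 2)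
    (φ : Aut (Cat.of (CR R))) :
    SemiInner R φ := by
  refine semiInner_of_powIso_one_of_mul (fun m k => ?_) φ
  rcases hR with hIBN | ⟨n, h, hT, hn⟩ | hT | hT
  · exact powIso_one_of_mul_of_eq_one fun a ha => (hIBN 1 a ha).symm
  · exact powIso_one_of_mul_of_eq_one fun a => hT.eq_one_of_powIso_one hn
  · exact hT.powIso_one_of_mul_of_one_one
  · exact hT.powIso_one_of_mul_of_one_two
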